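/- arXiv:2010.09464 — 2 statements merged into one kernel-verified Lean document; each statement's English description precedes it below -/
import Mathlib

section
/- There exists a class of languages learnable by a total, set-driven, monotone, explanatory learner that is not learnable by any (partial) strongly monotone, behaviourally correct, Gold-style learner: [RTxtSdMonEx] \ [TxtGSMonBc] ≠ ∅. -/
/-!
The class {2ℕ} ∪ {L_{2k+1}} is learned set-drivenly by conjecturing L_{2k+1} as soon as the
largest datum seen is the odd number 2k+1, and 2ℕ before that. On a text for L_{2k+1} the
only mind change is from 2ℕ to L_{2k+1}, which is monotone because 2ℕ ∩ L_{2k+1} ⊆ L_{2k+1}.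

A strongly monotone learner, on the other hand, has to conjecture 2ℕ at some stage n₀ of the
text 0, 2, 4, …. Continuing that prefix to a text for the finite language L_{2n₀+1}, every
later conjecture must contain 2ℕ, so the learner never settles on L_{2n₀+1}.
-/

/-- The `e`-th computably enumerable set: the domain of the `e`-th partial
computable function in the standard numbering of `Nat.Partrec.Code`. -/
def Wset (e : ℕ) : Set ℕ := {x | ((Denumerable.ofNat Nat.Partrec.Code e).eval x).Dom}

/-- A text: a function from ℕ to ℕ ∪ {#}, with `none` playing the role of the pause symbol #. -/
def Text := ℕ → Option ℕ

/-- The content of a text: its range without the pause symbol. -/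
def content (T : Text) : Set ℕ := {x | ∃ n, T n = some x}

/-- The initial segment `T[n]` of a text, as a finite sequence over ℕ ∪ {#}. -/
def seg (T : Text) (n : ℕ) : List (Option ℕ) := (List.range n).map T

/-- The content of a finite sequence over ℕ ∪ {#}. -/
def contentSeg (l : List (Option ℕ)) : Set ℕ := {x | (some x) ∈ l}

/-- The content of `T[n]` as a finite set. -/
def fset (T : Text) (n : ℕ) : Finset ℕ := ((List.range n).map T).reduceOption.toFinset

/-- The language L_{2k+1} = {0, 2, 4, …, 2k, 2k+1}. -/
def Lodd (k : ℕ) : Set ℕ := {n | (Even n ∧ n ≤ 2 * k) ∨ n = 2 * k + 1}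

/-- The even numbers 2ℕ. -/
def Ev : Set ℕ := {n | Even n}

/-- The class {2ℕ} ∪ { L_{2k+1} : k ∈ ℕ }. -/
def sepClass : Set (Set ℕ) := insert Ev {L | ∃ k : ℕ, L = Lodd k}

/-- [RTxtSdMonEx]: classes learnable by some total computable set-driven learner which is
monotone and explanatory on texts of the learned languages. -/
def RTxtSdMonEx : Set (Set (Set ℕ)) :=
  {𝓛 | ∃ h : Finset ℕ → ℕ, Computable h ∧
    ∀ L ∈ 𝓛, ∀ T : Text, content T = L →
      (∃ e : ℕ, Wset e = L ∧ ∃ n₀ : ℕ, ∀ n ≥ n₀, h (fset T n) = e) ∧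
      (∀ i j : ℕ, i ≤ j →
        Wset (h (fset T i)) ∩ content T ⊆ Wset (h (fset T j)) ∩ content T)}

/-- [TxtGSMonBc]: classes learnable by some partial computable Gold-style learner which is
strongly monotone and behaviourally correct on texts of the learned languages. -/
def TxtGSMonBc : Set (Set (Set ℕ)) :=
  {𝓛 | ∃ h : List (Option ℕ) →. ℕ, Partrec h ∧
    ∀ L ∈ 𝓛, ∀ T : Text, content T = L →
      (∃ n₀ : ℕ, ∀ n ≥ n₀, ∃ e ∈ h (seg T n), Wset e = L) ∧
      (∀ i j : ℕ, i ≤ j → ∀ a ∈ h (seg T i), ∀ b ∈ h (seg T j), Wset a ⊆ Wset b)}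

open Denumerable Encodable Nat.Partrec.Code

theorem exists_primrec_Wset_eq {P : ℕ → ℕ → Prop}
    (hP : REPred fun p : ℕ × ℕ => P p.1 p.2) :
    ∃ f : ℕ → ℕ, Primrec f ∧ ∀ k, Wset (f k) = {x | P k x} := by
  have hz : Partrec fun z : ℕ =>
      (Part.assert (P z.unpair.1 z.unpair.2) fun _ => Part.some ()).map fun _ => (0 : ℕ) :=
    (hP.comp Computable.unpair).map ((Computable.const 0).comp Computable.snd).to₂
  obtain ⟨c, hc⟩ := exists_code.1 (Partrec.nat_iff.1 hz)
  refine ⟨fun k => encode (curry c k),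
    Primrec.encode.comp (primrec₂_curry.comp (Primrec.const c) Primrec.id), fun k => ?_⟩
  ext x
  simp [Wset, eval_curry, hc, Part.assert]

theorem exists_Wset_eq {P : ℕ → Prop} (hP : REPred P) : ∃ e, Wset e = {x | P x} := by
  obtain ⟨f, -, hf⟩ := exists_primrec_Wset_eq (P := fun _ => P) (hP.comp Computable.snd)
  exact ⟨f 0, hf 0⟩

theorem primrecPred_even : PrimrecPred fun n : ℕ => Even n :=
  (Primrec.eq.comp (Primrec.nat_mod.comp Primrec.id (Primrec.const 2)) (Primrec.const 0)).of_eq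
    fun _ => Nat.even_iff.symm

theorem primrecPred_mem_Lodd : PrimrecPred fun p : ℕ × ℕ => p.2 ∈ Lodd p.1 :=
  .or (.and (primrecPred_even.comp Primrec.snd)
      (Primrec.nat_le.comp Primrec.snd (Primrec.nat_mul.comp (Primrec.const 2) Primrec.fst)))
    (Primrec.eq.comp Primrec.snd
      (Primrec.nat_add.comp (Primrec.nat_mul.comp (Primrec.const 2) Primrec.fst)
        (Primrec.const 1)))

theorem exists_Wset_eq_Ev : ∃ e, Wset e = Ev :=
  exists_Wset_eq primrecPred_even.computablePred.to_re

theorem exists_primrec_Wset_eq_Lodd :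
    ∃ eL : ℕ → ℕ, Primrec eL ∧ ∀ k, Wset (eL k) = Lodd k :=
  exists_primrec_Wset_eq primrecPred_mem_Lodd.computablePred.to_re

theorem foldl_eq_raise' (l : List ℕ) (n : ℕ) (acc : List ℕ) :
    (l.foldl (fun q m => (m + q.1 + 1, (m + q.1) :: q.2)) (n, acc)).2
      = (raise' l n).reverse ++ acc := by
  induction l generalizing n acc with
  | nil => simp [raise']
  | cons a l ih => simp [raise', ih]

theorem primrec₂_raise' : Primrec₂ raise' := by
  have hstep : Primrec₂ fun (_ : List ℕ × ℕ) (q : (ℕ × List ℕ) × ℕ) =>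
      (q.2 + q.1.1 + 1, (q.2 + q.1.1) :: q.1.2) := by
    have hsum : Primrec₂ fun (_ : List ℕ × ℕ) (q : (ℕ × List ℕ) × ℕ) =>
        q.2 + q.1.1 :=
      Primrec.nat_add.comp (Primrec.snd.comp Primrec.snd)
        (Primrec.fst.comp (Primrec.fst.comp Primrec.snd))
    exact Primrec.pair (Primrec.nat_add.comp hsum (Primrec.const 1))
      (Primrec.list_cons.comp hsum (Primrec.snd.comp (Primrec.fst.comp Primrec.snd)))
  refine (Primrec.list_reverse.comp (Primrec.snd.comp (Primrec.list_foldl Primrec.fst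
    (Primrec.pair Primrec.snd (Primrec.const [])) hstep))).of_eq fun p => ?_
  simp [foldl_eq_raise']

-- `Finset ℕ` is encoded by the list of gaps between its consecutive elements.
theorem ofNat_finset_eq_raise'Finset (n : ℕ) :
    ofNat (Finset ℕ) n = raise'Finset (ofNat (List ℕ) n) 0 := by
  rw [ofNat_of_decode (by with_unfolding_all rfl)]
  ext x
  simp [Denumerable.eqv]

theorem computable_finset_sup_id : Computable fun s : Finset ℕ => s.sup id := by
  refine Primrec.to_comp (Primrec.ofNat_iff.2 ?_)
  refine (Primrec.list_foldr (primrec₂_raise'.comp (Primrec.ofNat (List ℕ)) (Primrec.const 0))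
    (Primrec.const 0) (Primrec.nat_max.comp (Primrec.fst.comp Primrec.snd)
      (Primrec.snd.comp Primrec.snd)).to₂).of_eq fun n => ?_
  simp [ofNat_finset_eq_raise'Finset, raise'Finset, Finset.sup_def]

theorem mem_fset {T : Text} {n x : ℕ} : x ∈ fset T n ↔ ∃ m < n, T m = some x := by
  simp only [fset, List.mem_toFinset, List.reduceOption_mem_iff]
  exact List.mem_map (f := T).trans (by simp)

theorem fset_subset_content (T : Text) (n : ℕ) : ↑(fset T n) ⊆ content T := fun x hx => by
  obtain ⟨m, -, hm⟩ := mem_fset.1 hx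
  exact ⟨m, hm⟩

theorem fset_mono (T : Text) : Monotone (fset T) := fun i j hij x hx => by
  obtain ⟨m, hm, hTm⟩ := mem_fset.1 hx
  exact mem_fset.2 ⟨m, hm.trans_le hij, hTm⟩

theorem eventually_mem_fset {T : Text} {x : ℕ} (hx : x ∈ content T) :
    ∃ n₀, ∀ n ≥ n₀, x ∈ fset T n := by
  obtain ⟨m, hm⟩ := hx
  exact ⟨m + 1, fun n hn => mem_fset.2 ⟨m, hn, hm⟩⟩

-- The largest datum is odd exactly when the odd element `2k+1` of `L_{2k+1}` has appeared.
def sepLearner (eEv : ℕ) (eL : ℕ → ℕ) (s : Finset ℕ) : ℕ :=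
  if s.sup id % 2 = 1 then eL (s.sup id / 2) else eEv

theorem computable_sepLearner {eEv : ℕ} {eL : ℕ → ℕ} (hL : Primrec eL) :
    Computable (sepLearner eEv eL) := by
  have hchoose : Primrec fun m : ℕ => if m % 2 = 1 then eL (m / 2) else eEv :=
    Primrec.ite (Primrec.eq.comp (Primrec.nat_mod.comp Primrec.id (Primrec.const 2))
      (Primrec.const 1)) (hL.comp (Primrec.nat_div.comp Primrec.id (Primrec.const 2)))
      (Primrec.const eEv)
  exact hchoose.to_comp.comp computable_finset_sup_id

theorem even_sup_id {s : Finset ℕ} (hs : ∀ m ∈ s, Even m) : Even (s.sup id) :=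
  Finset.sup_induction Even.zero
    (fun a ha b hb => by rcases max_choice a b with h | h <;> simp_all) hs

theorem sepLearner_of_forall_even {eEv : ℕ} {eL : ℕ → ℕ} {s : Finset ℕ}
    (hs : ∀ m ∈ s, Even m) : sepLearner eEv eL s = eEv := by
  have := Nat.even_iff.1 (even_sup_id hs)
  simp [sepLearner, this]

theorem sepLearner_of_subset_Lodd {eEv : ℕ} {eL : ℕ → ℕ} {s : Finset ℕ} {k : ℕ}
    (hs : ↑s ⊆ Lodd k) : sepLearner eEv eL s = if 2 * k + 1 ∈ s then eL k else eEv := by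
  split_ifs with hk
  · have hsup : s.sup id = 2 * k + 1 := by
      refine le_antisymm (Finset.sup_le fun m hm => ?_) (Finset.le_sup (f := id) hk)
      rcases hs hm with ⟨-, hm⟩ | rfl <;> simp only [id] <;> omega
    simp [sepLearner, hsup, Nat.mul_add_div]
  · refine sepLearner_of_forall_even fun m hm => ?_
    rcases hs hm with ⟨hm, -⟩ | rfl
    exacts [hm, absurd hm hk]

theorem sepClass_mem_RTxtSdMonEx : sepClass ∈ RTxtSdMonEx := by
  obtain ⟨eEv, hEv⟩ := exists_Wset_eq_Ev
  obtain ⟨eL, hprim, hL⟩ := exists_primrec_Wset_eq_Lodd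
  refine ⟨sepLearner eEv eL, computable_sepLearner hprim, ?_⟩
  rintro L (rfl | ⟨k, rfl⟩) T hT
  · have hconst n : sepLearner eEv eL (fset T n) = eEv :=
      sepLearner_of_forall_even fun m hm => (hT ▸ fset_subset_content T n hm : m ∈ Ev)
    exact ⟨⟨eEv, hEv, 0, fun n _ => hconst n⟩, fun i j _ => by rw [hconst i, hconst j]⟩
  · have hs n : ↑(fset T n) ⊆ Lodd k := hT ▸ fset_subset_content T n
    constructor
    · obtain ⟨n₀, hn₀⟩ := eventually_mem_fset (hT ▸ Or.inr rfl : 2 * k + 1 ∈ content T)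
      refine ⟨eL k, hL k, n₀, fun n hn => ?_⟩
      rw [sepLearner_of_subset_Lodd (hs n), if_pos (hn₀ n hn)]
    · rintro i j hij x ⟨hxi, hxT⟩
      refine ⟨?_, hxT⟩
      rw [sepLearner_of_subset_Lodd (hs j)]
      split_ifs with hj
      · rwa [hL, ← hT]
      · rwa [sepLearner_of_subset_Lodd (hs i), if_neg fun hi => hj (fset_mono T hij hi)] at hxi

def evenText : Text := fun n => some (2 * n)

def oddText (k : ℕ) : Text := fun n => some (min (2 * n) (2 * k + 1))

theorem content_evenText : content evenText = Ev := by
  ext x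
  simp [content, evenText, Ev, even_iff_two_dvd, dvd_def, eq_comm]

theorem content_oddText (k : ℕ) : content (oddText k) = Lodd k := by
  ext x
  simp only [content, oddText, Option.some.injEq, Lodd, Set.mem_ofPred_eq, even_iff_two_dvd]
  constructor
  · rintro ⟨n, rfl⟩
    omega
  · rintro (⟨⟨n, rfl⟩, hn⟩ | rfl)
    exacts [⟨n, by omega⟩, ⟨k + 1, by omega⟩]

theorem seg_oddText {k n : ℕ} (hn : n ≤ k + 1) : seg (oddText k) n = seg evenText n :=
  List.map_congr_left fun m hm => by
    simp only [List.mem_range] at hm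
    simp [oddText, evenText]
    omega

theorem Ev_not_subset_Lodd (k : ℕ) : ¬ Ev ⊆ Lodd k := fun h => by
  rcases h (⟨k + 1, by ring⟩ : Even (2 * k + 2)) with ⟨-, h⟩ | h <;> omega

theorem Wset_subset_of_mem_seg {h : List (Option ℕ) →. ℕ} {T : Text} {L : Set ℕ} {n e : ℕ}
    (he : e ∈ h (seg T n)) (hBc : ∃ n₀, ∀ m ≥ n₀, ∃ e' ∈ h (seg T m), Wset e' = L)
    (hSMon : ∀ i j, i ≤ j → ∀ a ∈ h (seg T i), ∀ b ∈ h (seg T j), Wset a ⊆ Wset b) :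
    Wset e ⊆ L := by
  obtain ⟨n₀, hn₀⟩ := hBc
  obtain ⟨e', he', rfl⟩ := hn₀ (max n n₀) (le_max_right n n₀)
  exact hSMon n (max n n₀) (le_max_left n n₀) e he e' he'

theorem sepClass_not_mem_TxtGSMonBc : sepClass ∉ TxtGSMonBc := by
  rintro ⟨h, -, hlearn⟩
  obtain ⟨⟨n₀, hBc⟩, -⟩ := hlearn Ev (Set.mem_insert _ _) evenText content_evenText
  obtain ⟨e, he, heEv⟩ := hBc n₀ le_rfl
  obtain ⟨hBc', hSMon'⟩ :=
    hlearn (Lodd n₀) (Or.inr ⟨n₀, rfl⟩) (oddText n₀) (content_oddText n₀)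
  rw [← seg_oddText n₀.le_succ] at he
  exact Ev_not_subset_Lodd n₀ (heEv ▸ Wset_subset_of_mem_seg he hBc' hSMon')

/-- [RTxtSdMonEx] \ [TxtGSMonBc] ≠ ∅. -/
theorem RTxtSdMonEx_not_sub_TxtGSMonBc :
    ∃ 𝓛 : Set (Set ℕ), 𝓛 ∈ RTxtSdMonEx ∧ 𝓛 ∉ TxtGSMonBc :=
  ⟨sepClass, sepClass_mem_RTxtSdMonEx, sepClass_not_mem_TxtGSMonBc⟩
end

section
/- If a total learner h' Psd-Mon-Ex-learns a language L, and σ is a finite sequence of elements of L such that x, y ∈ W_{h'(content(σ), |σ|)} for elements x, y, and both L ∪ {x} and L ∪ {y} (suitably completed) are also learned by h' with σ extendable to texts of them, then for every finite sequence τ of elements of L, {x, y} ⊆ W_{h'(content(σ τ), |σ τ|)}; consequently, if x ∉ L or y ∉ L, then h' never outputs a correct index for L on any extension of σ by elements of L, so h' fails to Ex-learn L. -/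
/-- A total partially set-driven learner is monotone (w.r.t. the target) on every text of `L`. -/
def PsdMonOn (h' : Finset ℕ × ℕ → ℕ) (L : Set ℕ) : Prop :=
  ∀ T : Text, content T = L → ∀ i j : ℕ, i ≤ j →
    Wset (h' (fset T i, i)) ∩ L ⊆ Wset (h' (fset T j, j)) ∩ L

/-- A total partially set-driven learner Ex-learns `L` on the text `T`. -/
def PsdExOn (h' : Finset ℕ × ℕ → ℕ) (T : Text) (L : Set ℕ) : Prop :=
  ∃ e : ℕ, Wset e = L ∧ ∃ n₀ : ℕ, ∀ n ≥ n₀, h' (fset T n, n) = e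

/-!
Monotonicity of `h'` on a text of `L₁` forces every element of `L₁` that appears in a hypothesis
to stay in all later hypotheses on that text. Every finite sequence over `L` extending `σ` is an
initial segment of a text of `L₁`, so `x` survives along it; likewise `y` via `L₂`. If `x ∉ L` or
`y ∉ L`, no such hypothesis is an index of `L`, so `h'` cannot converge to one on a text of `L`
beginning with `σ`.
-/

def psdHyp (h' : Finset ℕ × ℕ → ℕ) (ρ : List (Option ℕ)) : ℕ :=
  h' (ρ.reduceOption.toFinset, ρ.length)

lemma length_seg (T : Text) (n : ℕ) : (seg T n).length = n := by
  simp [seg, List.length_map (f := T)]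

lemma psdHyp_seg (h' : Finset ℕ × ℕ → ℕ) (T : Text) (n : ℕ) :
    psdHyp h' (seg T n) = h' (fset T n, n) := by
  rw [psdHyp, length_seg]
  rfl

lemma List.reduceOption_map_some {α : Type*} (l : List α) : (l.map some).reduceOption = l := by
  induction l <;> simp_all [List.reduceOption_cons_of_some]

lemma psdHyp_map_some (h' : Finset ℕ × ℕ → ℕ) (σ : List ℕ) :
    psdHyp h' (σ.map some) = h' (σ.toFinset, σ.length) := by
  rw [psdHyp, List.reduceOption_map_some, List.length_map]

lemma seg_prefix_of_le (T : Text) {m n : ℕ} (hmn : m ≤ n) : seg T m <+: seg T n := by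
  have : List.range m = (List.range n).take m := by rw [List.take_range, min_eq_left hmn]
  exact (this ▸ List.take_prefix m (List.range n)).map T

lemma mem_content_of_mem_seg {T : Text} {n a : ℕ} (ha : some a ∈ seg T n) : a ∈ content T := by
  obtain ⟨k, -, hk⟩ := List.mem_map.mp ha
  exact ⟨k, hk⟩

open Classical in
/-- A text beginning with `ρ` whose content is `L'` whenever `ρ` is a sequence over `L'`. -/
noncomputable def Text.extend (ρ : List (Option ℕ)) (L' : Set ℕ) : Text := fun k =>
  if hk : k < ρ.length then ρ[k] else if k - ρ.length ∈ L' then some (k - ρ.length) else none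

lemma Text.seg_extend_of_le {ρ : List (Option ℕ)} (L' : Set ℕ) {m : ℕ} (hm : m ≤ ρ.length) :
    seg (Text.extend ρ L') m = ρ.take m := by
  apply List.ext_getElem (by rw [length_seg, List.length_take, min_eq_left hm])
  intro i hi _
  rw [length_seg] at hi
  simp only [seg, List.getElem_map (f := Text.extend ρ L'), List.getElem_range, List.getElem_take]
  exact dif_pos (by omega)

lemma Text.content_extend {ρ : List (Option ℕ)} {L' : Set ℕ} (hρ : ∀ a, some a ∈ ρ → a ∈ L') :
    content (Text.extend ρ L') = L' := by
  ext a
  constructor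
  · rintro ⟨k, hk⟩
    simp only [Text.extend] at hk
    split_ifs at hk with hlt hmem
    · exact hρ a (hk ▸ List.getElem_mem hlt)
    · exact Option.some_injective _ hk ▸ hmem
  · intro ha
    exact ⟨ρ.length + a, by simp [Text.extend, ha]⟩

/-- `ρ` extends to a text of `L'` (`Text.extend`), and monotonicity on that text carries `z`
from the hypothesis at `ρ₁` to the one at `ρ`. -/
lemma PsdMonOn.mem_psdHyp_of_prefix {h' : Finset ℕ × ℕ → ℕ} {L' : Set ℕ} (hMon : PsdMonOn h' L')
    {z : ℕ} (hz : z ∈ L') {ρ₁ ρ : List (Option ℕ)} (hpre : ρ₁ <+: ρ)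
    (hρ : ∀ a, some a ∈ ρ → a ∈ L') (hzW : z ∈ Wset (psdHyp h' ρ₁)) :
    z ∈ Wset (psdHyp h' ρ) := by
  set T := Text.extend ρ L'
  have hseg : ∀ ρ' : List (Option ℕ), ρ' <+: ρ → seg T ρ'.length = ρ' := fun ρ' hρ' => by
    rw [Text.seg_extend_of_le L' hρ'.length_le, ← List.prefix_iff_eq_take.mp hρ']
  have hmono := hMon T (Text.content_extend hρ) ρ₁.length ρ.length hpre.length_le
  rw [← psdHyp_seg h' T, ← psdHyp_seg h' T, hseg ρ₁ hpre, hseg ρ List.prefix_rfl] at hmono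
  exact (hmono ⟨hzW, hz⟩).1

theorem mon_retention_lemma_general (h' : Finset ℕ × ℕ → ℕ) (L L₁ L₂ : Set ℕ) (x y : ℕ)
    (hL₁ : L ∪ {x} ⊆ L₁) (hL₂ : L ∪ {y} ⊆ L₂)
    (hMon₁ : PsdMonOn h' L₁) (hMon₂ : PsdMonOn h' L₂)
    (σ : List ℕ) (hσ : ∀ a ∈ σ, a ∈ L)
    (hx : x ∈ Wset (h' (σ.toFinset, σ.length)))
    (hy : y ∈ Wset (h' (σ.toFinset, σ.length))) :
    (∀ τ : List ℕ, (∀ a ∈ τ, a ∈ L) →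
      x ∈ Wset (h' ((σ ++ τ).toFinset, (σ ++ τ).length)) ∧
      y ∈ Wset (h' ((σ ++ τ).toFinset, (σ ++ τ).length))) ∧
    ((x ∉ L ∨ y ∉ L) →
      (∀ τ : List ℕ, (∀ a ∈ τ, a ∈ L) →
        Wset (h' ((σ ++ τ).toFinset, (σ ++ τ).length)) ≠ L) ∧
      (∀ T : Text, content T = L → seg T σ.length = σ.map some →
        ¬ PsdExOn h' T L)) := by
  have retain : ∀ ρ, σ.map some <+: ρ → (∀ a, some a ∈ ρ → a ∈ L) →
      x ∈ Wset (psdHyp h' ρ) ∧ y ∈ Wset (psdHyp h' ρ) := fun ρ hpre hρ =>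
    ⟨hMon₁.mem_psdHyp_of_prefix (hL₁ (.inr rfl)) hpre (fun a ha => hL₁ (.inl (hρ a ha)))
        (psdHyp_map_some h' σ ▸ hx),
      hMon₂.mem_psdHyp_of_prefix (hL₂ (.inr rfl)) hpre (fun a ha => hL₂ (.inl (hρ a ha)))
        (psdHyp_map_some h' σ ▸ hy)⟩
  have retain_list : ∀ τ : List ℕ, (∀ a ∈ τ, a ∈ L) →
      x ∈ Wset (h' ((σ ++ τ).toFinset, (σ ++ τ).length)) ∧
      y ∈ Wset (h' ((σ ++ τ).toFinset, (σ ++ τ).length)) := fun τ hτ => by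
    rw [← psdHyp_map_some h' (σ ++ τ)]
    refine retain _ (List.map_append .. ▸ List.prefix_append _ _) fun a ha => ?_
    exact (List.mem_append.mp ((List.mem_map_of_injective (Option.some_injective _)).mp ha)).elim
      (hσ a) (hτ a)
  refine ⟨retain_list, fun hxy => ⟨fun τ hτ hW => ?_, ?_⟩⟩
  · exact hxy.elim (· (hW ▸ (retain_list τ hτ).1)) (· (hW ▸ (retain_list τ hτ).2))
  · rintro T hT hσT ⟨e, hWe, n₀, hconv⟩
    have hpre : σ.map some <+: seg T (max n₀ σ.length) :=
      hσT ▸ seg_prefix_of_le T (le_max_right _ _)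
    have hret := retain _ hpre fun a ha => hT ▸ mem_content_of_mem_seg ha
    rw [psdHyp_seg, hconv _ (le_max_left _ _), hWe] at hret
    exact hxy.elim (· hret.1) (· hret.2)

/-- if a total Psd-learner h' monotonically learns languages L₁ ⊇ L ∪ {x}
and L₂ ⊇ L ∪ {y}, and σ is a finite sequence over L with x, y ∈ W_{h'(content σ, |σ|)},
then x and y are retained in all hypotheses on extensions of σ by elements of L; hence if
x ∉ L or y ∉ L, no such hypothesis is correct for L and h' fails to Ex-learn L from any
text of L beginning with σ. -/
theorem mon_retention_lemma (h' : Finset ℕ × ℕ → ℕ) (L L₁ L₂ : Set ℕ) (x y : ℕ)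
    (hL₁ : L ∪ {x} ⊆ L₁) (hL₂ : L ∪ {y} ⊆ L₂)
    (hMonL : PsdMonOn h' L) (hMon₁ : PsdMonOn h' L₁) (hMon₂ : PsdMonOn h' L₂)
    (σ : List ℕ) (hσ : ∀ a ∈ σ, a ∈ L)
    (hx : x ∈ Wset (h' (σ.toFinset, σ.length)))
    (hy : y ∈ Wset (h' (σ.toFinset, σ.length))) :
    (∀ τ : List ℕ, (∀ a ∈ τ, a ∈ L) →
      x ∈ Wset (h' ((σ ++ τ).toFinset, (σ ++ τ).length)) ∧
      y ∈ Wset (h' ((σ ++ τ).toFinset, (σ ++ τ).length))) ∧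
    ((x ∉ L ∨ y ∉ L) →
      (∀ τ : List ℕ, (∀ a ∈ τ, a ∈ L) →
        Wset (h' ((σ ++ τ).toFinset, (σ ++ τ).length)) ≠ L) ∧
      (∀ T : Text, content T = L → seg T σ.length = σ.map some →
        ¬ PsdExOn h' T L)) :=
  mon_retention_lemma_general h' L L₁ L₂ x y hL₁ hL₂ hMon₁ hMon₂ σ hσ hx hy
end
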